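/- For N ≥ 5, α ∈ ℝ, and γ ∈ ℝ, the function v(x) = x₁|x|^{-α} satisfies Δ²v - γ|x|^{-4} v = (α(N-α)(α+2)(N-α-2) - γ) · x₁ |x|^{-α-4} pointwise on the upper half-space minus the origin. -/

import Mathlib

open scoped Real

/-- The Laplacian of `f : ℝ^N → ℝ` at `x`, defined as the sum of second derivatives
along the coordinate directions. -/
noncomputable def laplacian {N : ℕ} (f : EuclideanSpace ℝ (Fin N) → ℝ)
    (x : EuclideanSpace ℝ (Fin N)) : ℝ :=
  ∑ i : Fin N, iteratedFDeriv ℝ 2 f x ![EuclideanSpace.single i 1, EuclideanSpace.single i 1]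

/-- The bilaplacian `Δ²`. -/
noncomputable def bilaplacian {N : ℕ} (f : EuclideanSpace ℝ (Fin N) → ℝ)
    (x : EuclideanSpace ℝ (Fin N)) : ℝ :=
  laplacian (laplacian f) x

/-!
For a linear form `ℓ = ⟪a, ·⟫` on an `n`-dimensional space, `Δ (ℓ ‖·‖ ^ p) = p (p + n) ℓ ‖·‖ ^ (p - 2)`
away from the origin: the radial factor contributes `p (p + n - 2)` and the cross term
`2 ⟪∇ℓ, ∇‖·‖ ^ p⟫` another `2p`. Applied with `p = -α` and then `p = -α - 2`, this gives
`Δ² v = (-α) (N - α) (-α - 2) (N - α - 2) x₁ ‖x‖ ^ (-α - 4)`.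
-/

open scoped RealInnerProductSpace Topology Laplacian

section
variable {E : Type*} [NormedAddCommGroup E] [InnerProductSpace ℝ E] {x : E}

theorem hasFDerivAt_norm_rpow_of_ne_zero (p : ℝ) (hx : x ≠ 0) :
    HasFDerivAt (fun y : E ↦ ‖y‖ ^ p) ((p * ‖x‖ ^ (p - 2)) • innerSL ℝ x) x := by
  convert ((hasStrictFDerivAt_norm_sq x).hasFDerivAt.rpow_const (p := p / 2)
    (Or.inl (by simpa using hx))) using 1
  · ext y
    rw [← Real.rpow_natCast_mul (norm_nonneg y)]
    ring_nf
  · rw [← Real.rpow_natCast_mul (norm_nonneg x), ← Nat.cast_smul_eq_nsmul ℝ, smul_smul]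
    ring_nf

theorem hasFDerivAt_inner_mul_norm_rpow (a : E) (p : ℝ) (hx : x ≠ 0) :
    HasFDerivAt (fun y ↦ ⟪a, y⟫ * ‖y‖ ^ p)
      (⟪a, x⟫ • (p * ‖x‖ ^ (p - 2)) • innerSL ℝ x + ‖x‖ ^ p • innerSL ℝ a) x :=
  ((innerSL ℝ a).hasFDerivAt.mul (hasFDerivAt_norm_rpow_of_ne_zero p hx))

theorem iteratedFDeriv_two_inner_mul_norm_rpow (a : E) (p : ℝ) (hx : x ≠ 0) (u : E) :
    iteratedFDeriv ℝ 2 (fun y ↦ ⟪a, y⟫ * ‖y‖ ^ p) x ![u, u] =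
      2 * p * ⟪a, u⟫ * ⟪x, u⟫ * ‖x‖ ^ (p - 2) +
        p * ⟪a, x⟫ * (‖x‖ ^ (p - 2) * ‖u‖ ^ 2 + (p - 2) * ‖x‖ ^ (p - 2 - 2) * ⟪x, u⟫ ^ 2) := by
  have hfderiv : fderiv ℝ (fun y ↦ ⟪a, y⟫ * ‖y‖ ^ p) =ᶠ[𝓝 x]
      fun y ↦ ⟪a, y⟫ • (p * ‖y‖ ^ (p - 2)) • innerSL ℝ y + ‖y‖ ^ p • innerSL ℝ a := by
    filter_upwards [isOpen_ne.mem_nhds hx] with y hy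
    exact (hasFDerivAt_inner_mul_norm_rpow a p hy).fderiv
  have hfderiv_deriv : HasFDerivAt
      (fun y ↦ ⟪a, y⟫ • (p * ‖y‖ ^ (p - 2)) • innerSL ℝ y + ‖y‖ ^ p • innerSL ℝ a) _ x :=
    ((innerSL ℝ a).hasFDerivAt.smul
    (((hasFDerivAt_norm_rpow_of_ne_zero (p - 2) hx).const_mul p).smul (innerSL ℝ).hasFDerivAt)).add
    ((hasFDerivAt_norm_rpow_of_ne_zero p hx).smul_const (innerSL ℝ a))
  rw [iteratedFDeriv_two_apply, hfderiv.fderiv_eq, hfderiv_deriv.fderiv]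
  -- `innerSL ℝ` occurs here coerced to an `ℝ`-linear map, where `innerSL_apply_apply` does not fire.
  have hinner : ∀ v w : E, (innerSL ℝ : E →L[ℝ] E →L[ℝ] ℝ) v w = ⟪v, w⟫ := fun _ _ ↦ rfl
  simp only [hinner, real_inner_self_eq_norm_sq, Pi.smul_apply',
    Matrix.cons_val_zero, add_apply, smul_apply,
    ContinuousLinearMap.smulRight_apply, smul_eq_mul, Matrix.cons_val_one, Matrix.cons_val_fin_one]
  ring

variable [FiniteDimensional ℝ E]

theorem laplacian_inner_mul_norm_rpow (a : E) (p : ℝ) (hx : x ≠ 0) :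
    Δ (fun y ↦ ⟪a, y⟫ * ‖y‖ ^ p) x =
      ⟪(p * (p + Module.finrank ℝ E)) • a, x⟫ * ‖x‖ ^ (p - 2) := by
  let b := stdOrthonormalBasis ℝ E
  rw [InnerProductSpace.laplacian_eq_iteratedFDeriv_orthonormalBasis _ b]
  dsimp only
  have hpow : ‖x‖ ^ (p - 2 - 2) * ‖x‖ ^ 2 = ‖x‖ ^ (p - 2) := by
    rw [← Real.rpow_natCast, ← Real.rpow_add (norm_pos_iff.mpr hx)]
    norm_num
  have hab : ∑ i, ⟪a, b i⟫ * ⟪x, b i⟫ = ⟪a, x⟫ := by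
    simpa only [real_inner_comm x] using b.sum_inner_mul_inner a x
  have hsummand : ∀ i, iteratedFDeriv ℝ 2 (fun y ↦ ⟪a, y⟫ * ‖y‖ ^ p) x ![b i, b i] =
      2 * p * ‖x‖ ^ (p - 2) * (⟪a, b i⟫ * ⟪x, b i⟫) +
        p * ⟪a, x⟫ * (p - 2) * ‖x‖ ^ (p - 2 - 2) * ⟪x, b i⟫ ^ 2 + p * ⟪a, x⟫ * ‖x‖ ^ (p - 2) := by
    intro i
    rw [iteratedFDeriv_two_inner_mul_norm_rpow a p hx, b.norm_eq_one]
    ring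
  rw [Finset.sum_congr rfl fun i _ ↦ hsummand i, Finset.sum_add_distrib, Finset.sum_add_distrib,
    ← Finset.mul_sum, ← Finset.mul_sum, hab, b.sum_sq_inner_left, Finset.sum_const,
    Finset.card_univ, Fintype.card_fin, nsmul_eq_mul, real_inner_smul_left]
  linear_combination p * ⟪a, x⟫ * (p - 2) * hpow

theorem laplacian_laplacian_inner_mul_norm_rpow (a : E) (p : ℝ) (hx : x ≠ 0) :
    Δ (Δ (fun y ↦ ⟪a, y⟫ * ‖y‖ ^ p)) x =
      ⟪(p * (p + Module.finrank ℝ E) * ((p - 2) * (p - 2 + Module.finrank ℝ E))) • a, x⟫ *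
        ‖x‖ ^ (p - 4) := by
  have hΔ : Δ (fun y ↦ ⟪a, y⟫ * ‖y‖ ^ p) =ᶠ[𝓝 x]
      fun y ↦ ⟪(p * (p + Module.finrank ℝ E)) • a, y⟫ * ‖y‖ ^ (p - 2) := by
    filter_upwards [isOpen_ne.mem_nhds hx] with y hy
    exact laplacian_inner_mul_norm_rpow a p hy
  rw [(InnerProductSpace.laplacian_congr_nhds hΔ).eq_of_nhds, laplacian_inner_mul_norm_rpow _ _ hx,
    smul_smul]
  ring_nf

end

theorem laplacian_eq_laplacian {N : ℕ} (f : EuclideanSpace ℝ (Fin N) → ℝ) :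
    laplacian f = Δ f := by
  ext x
  simp [laplacian, InnerProductSpace.laplacian_eq_iteratedFDeriv_orthonormalBasis f
    (EuclideanSpace.basisFun (Fin N) ℝ)]

theorem bilaplacian_eq_laplacian_laplacian {N : ℕ} (f : EuclideanSpace ℝ (Fin N) → ℝ) :
    bilaplacian f = Δ (Δ f) := by
  ext x
  rw [bilaplacian, laplacian_eq_laplacian, laplacian_eq_laplacian]

/-- For `N ≥ 5`, `α ∈ ℝ` and `γ ∈ ℝ`, the function `v(x) = x₁|x|^{-α}` satisfies
`Δ²v - γ|x|^{-4} v = (α(N-α)(α+2)(N-α-2) - γ) x₁ |x|^{-α-4}` pointwise on the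
upper half-space minus the origin. -/
theorem bilaplacian_power_model (N : ℕ) (hN : 5 ≤ N) (α γ : ℝ)
    (v : EuclideanSpace ℝ (Fin N) → ℝ)
    (hv : ∀ x : EuclideanSpace ℝ (Fin N), v x = x ⟨0, by omega⟩ * ‖x‖ ^ (-α)) :
    ∀ x : EuclideanSpace ℝ (Fin N), 0 < x ⟨0, by omega⟩ → x ≠ 0 →
      bilaplacian v x - γ / ‖x‖ ^ 4 * v x =
        (α * ((N : ℝ) - α) * (α + 2) * ((N : ℝ) - α - 2) - γ) * x ⟨0, by omega⟩ * ‖x‖ ^ (-α - 4) := by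
  intro x _ hx
  have hv_inner : v = fun y ↦ ⟪EuclideanSpace.single ⟨0, by omega⟩ 1, y⟫ * ‖y‖ ^ (-α) := by
    ext y
    simp [hv, EuclideanSpace.inner_single_left]
  have hpow : ‖x‖ ^ (-α) = ‖x‖ ^ (-α - 4) * ‖x‖ ^ 4 := by
    rw [← Real.rpow_natCast, ← Real.rpow_add (norm_pos_iff.mpr hx)]
    norm_num
  rw [bilaplacian_eq_laplacian_laplacian, hv x, hv_inner,
    laplacian_laplacian_inner_mul_norm_rpow _ _ hx, finrank_euclideanSpace_fin, real_inner_smul_left,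
    EuclideanSpace.inner_single_left, map_one, one_mul, hpow]
  field_simp
  ring
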